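/- arXiv:2306.06614 — 2 statements merged into one kernel-verified Lean document; each statement's English description precedes it below -/
import Mathlib

section
/- The one-stage SVERK method Y_1 = e^{-hM} y_n + (h/2) f(Y_1), y_{n+1} = e^{-hM} y_n + h f(Y_1), applied to a linear Hamiltonian system y' = J^{-1}Q y + J^{-1}R y (i.e., M = -J^{-1}Q and f(y) = J^{-1}R y with Q, R symmetric), is symplectic: the transition matrix S defined by y_{n+1} = S y_n satisfies S^T J S = J. -/
/-!
With `A = J⁻¹R`, the transition matrix factors as `S = (1 + (h/2)A)(1 - (h/2)A)⁻¹ e^{-hM}`: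
a Cayley transform of `A` followed by the exact flow. Since `J` is skew and `Q`, `R` are
symmetric, both `A` and `-hM = h J⁻¹Q` are skew-adjoint for the form `J`, and both the Cayley
transform and the exponential of a `J`-skew-adjoint matrix preserve `J`.
-/

open Matrix NormedSpace

namespace Matrix

variable {n : Type*} [Fintype n]

/-- For the standard skew form `J` this is symplecticity. -/
def PreservesForm {R : Type*} [CommRing R] (J S : Matrix n n R) : Prop :=
  Sᵀ * J * S = J

theorem PreservesForm.mul {R : Type*} [CommRing R] {J S T : Matrix n n R}
    (hS : J.PreservesForm S) (hT : J.PreservesForm T) : J.PreservesForm (S * T) := by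
  unfold PreservesForm at *
  rw [transpose_mul, show Tᵀ * Sᵀ * J * (S * T) = Tᵀ * (Sᵀ * J * S) * T by noncomm_ring, hS, hT]

variable [DecidableEq n]

section CommRing

variable {R : Type*} [CommRing R] {J A : Matrix n n R}

theorem isSkewAdjoint_inv_mul_of_isSymm (hJ : IsUnit J) (hJT : Jᵀ = -J) {B : Matrix n n R}
    (hB : B.IsSymm) : J.IsSkewAdjoint (J⁻¹ * B) := by
  have hdet : IsUnit J.det := (isUnit_iff_isUnit_det J).mp hJ
  have hinvT : J⁻¹ᵀ = -J⁻¹ := by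
    rw [transpose_nonsing_inv, hJT]
    exact inv_eq_left_inv (by rw [neg_mul_neg, nonsing_inv_mul _ hdet])
  unfold Matrix.IsSkewAdjoint Matrix.IsAdjointPair
  rw [transpose_mul, hB.eq, hinvT, mul_neg, neg_mul,
    mul_assoc, nonsing_inv_mul _ hdet, mul_neg, ← mul_assoc, mul_nonsing_inv _ hdet,
    mul_one, one_mul]

theorem IsSkewAdjoint.smul (hA : J.IsSkewAdjoint A) (c : R) : J.IsSkewAdjoint (c • A) := by
  rw [← mem_skewAdjointMatricesSubmodule] at hA ⊢
  exact Submodule.smul_mem _ c hA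

/-- `1 + A` and `1 - A` both pull `J` back to `J + Aᵀ J A`. -/
theorem IsSkewAdjoint.preservesForm_cayley (hA : J.IsSkewAdjoint A) (hC : IsUnit (1 - A)) :
    J.PreservesForm ((1 + A) * (1 - A)⁻¹) := by
  have hdet : IsUnit (1 - A).det := (isUnit_iff_isUnit_det _).mp hC
  have hskew : Aᵀ * J = -(J * A) := by rw [show Aᵀ * J = J * -A from hA, mul_neg]
  have hpullback : (1 + A)ᵀ * J * (1 + A) = (1 - A)ᵀ * J * (1 - A) := by
    simp only [transpose_add, transpose_sub, transpose_one, add_mul, sub_mul, mul_add, mul_sub,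
      one_mul, mul_one, hskew]
    abel
  unfold PreservesForm
  calc ((1 + A) * (1 - A)⁻¹)ᵀ * J * ((1 + A) * (1 - A)⁻¹)
      = ((1 - A)⁻¹)ᵀ * ((1 + A)ᵀ * J * (1 + A)) * (1 - A)⁻¹ := by
        rw [transpose_mul]; noncomm_ring
    _ = ((1 - A) * (1 - A)⁻¹)ᵀ * J * ((1 - A) * (1 - A)⁻¹) := by
        rw [hpullback, transpose_mul (1 - A)]; noncomm_ring
    _ = J := by rw [mul_nonsing_inv _ hdet, transpose_one, one_mul, mul_one]

end CommRing

theorem one_add_smul_mul_inv_eq_cayley {K : Type*} [Field K] [NeZero (2 : K)]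
    {A : Matrix n n K} {h : K} (hC : IsUnit (1 - (h / 2) • A)) :
    1 + h • (A * (1 - (h / 2) • A)⁻¹) = (1 + (h / 2) • A) * (1 - (h / 2) • A)⁻¹ := by
  have hdet : IsUnit (1 - (h / 2) • A).det := (isUnit_iff_isUnit_det _).mp hC
  have hhalf : h / 2 - h = -(h / 2) := by linear_combination add_halves h
  rw [show 1 + (h / 2) • A = (1 - (h / 2) • A) + h • A by
      rw [sub_add, ← sub_smul, hhalf, neg_smul, sub_neg_eq_add], add_mul,
    mul_nonsing_inv _ hdet, smul_mul_assoc]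

/-- `exp Aᵀ = J exp (-A) J⁻¹`. -/
theorem IsSkewAdjoint.preservesForm_exp {𝔸 : Type*} [NormedCommRing 𝔸] [NormedAlgebra ℚ 𝔸]
    [CompleteSpace 𝔸] {J A : Matrix n n 𝔸} (hJ : IsUnit J) (hA : J.IsSkewAdjoint A) :
    J.PreservesForm (exp A) := by
  have hdet : IsUnit J.det := (isUnit_iff_isUnit_det J).mp hJ
  have hconj : Aᵀ = J * (-A) * J⁻¹ := by
    rw [← show Aᵀ * J = J * -A from hA, mul_assoc, mul_nonsing_inv _ hdet, mul_one]
  unfold PreservesForm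
  rw [← exp_transpose, hconj, exp_conj _ _ hJ, mul_assoc _ J⁻¹ J, nonsing_inv_mul _ hdet,
    mul_one, mul_assoc, ← exp_add_of_commute _ _ (Commute.neg_left (Commute.refl A)),
    neg_add_cancel, exp_zero, mul_one]

end Matrix

theorem sverk1_linear_symplectic_general (d : ℕ)
    (J : Matrix (Fin d ⊕ Fin d) (Fin d ⊕ Fin d) ℝ)
    (hJ : J = Matrix.fromBlocks (0 : Matrix (Fin d) (Fin d) ℝ) 1 (-1) 0)
    (Q R M : Matrix (Fin d ⊕ Fin d) (Fin d ⊕ Fin d) ℝ)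
    (hQ : Q.IsSymm) (hR : R.IsSymm) (hM : M = -(J⁻¹ * Q))
    (h : ℝ)
    (hinv : IsUnit (1 - (h / 2) • (J⁻¹ * R)))
    (S : Matrix (Fin d ⊕ Fin d) (Fin d ⊕ Fin d) ℝ)
    (hS : S = NormedSpace.exp (-h • M) +
      h • (J⁻¹ * R * (1 - (h / 2) • (J⁻¹ * R))⁻¹ * NormedSpace.exp (-h • M))) :
    Sᵀ * J * S = J := by
  have hJT : Jᵀ = -J := by
    subst hJ
    simp [fromBlocks_transpose, fromBlocks_neg]
  have hJunit : IsUnit J := by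
    refine IsUnit.of_mul_eq_one (-J) ?_
    subst hJ
    simp [fromBlocks_multiply, fromBlocks_neg, ← fromBlocks_one]
  have hflow : J.IsSkewAdjoint (-h • M) := by
    rw [hM, neg_smul, smul_neg, neg_neg]
    exact (isSkewAdjoint_inv_mul_of_isSymm hJunit hJT hQ).smul h
  have hstage : J.IsSkewAdjoint ((h / 2) • (J⁻¹ * R)) :=
    (isSkewAdjoint_inv_mul_of_isSymm hJunit hJT hR).smul (h / 2)
  have hSfactor : S = (1 + (h / 2) • (J⁻¹ * R)) * (1 - (h / 2) • (J⁻¹ * R))⁻¹ *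
      exp (-h • M) := by
    rw [hS, ← one_add_smul_mul_inv_eq_cayley hinv, add_mul, one_mul, smul_mul_assoc]
  rw [hSfactor]
  exact (hstage.preservesForm_cayley hinv).mul (hflow.preservesForm_exp hJunit)

/-- the one-stage SVERK method applied to a linear Hamiltonian system
is symplectic: its transition matrix `S` satisfies `Sᵀ J S = J`. -/
theorem sverk1_linear_symplectic (d : ℕ)
    (J : Matrix (Fin d ⊕ Fin d) (Fin d ⊕ Fin d) ℝ)
    (hJ : J = Matrix.fromBlocks (0 : Matrix (Fin d) (Fin d) ℝ) 1 (-1) 0)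
    (Q R M : Matrix (Fin d ⊕ Fin d) (Fin d ⊕ Fin d) ℝ)
    (hQ : Q.IsSymm) (hR : R.IsSymm) (hM : M = -(J⁻¹ * Q))
    (h : ℝ) (hh : 0 < h)
    (hinv : IsUnit (1 - (h / 2) • (J⁻¹ * R)))
    (S : Matrix (Fin d ⊕ Fin d) (Fin d ⊕ Fin d) ℝ)
    (hS : S = NormedSpace.exp (-h • M) +
      h • (J⁻¹ * R * (1 - (h / 2) • (J⁻¹ * R))⁻¹ * NormedSpace.exp (-h • M))) :
    Sᵀ * J * S = J :=
  sverk1_linear_symplectic_general d J hJ Q R M hQ hR hM h hinv S hS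
end

section
/- For a scalar linear test problem y' + λ y = μ y with λ, μ ∈ ℝ, the one-stage second-order IMSVERK method Y_1 = e^{-λh/2} y_0 + (h/2) μ Y_1, y_1 = e^{-λh} y_0 + h μ Y_1 − (h²/2) λ μ y_0 produces a numerical solution satisfying y_1 − y(h) = O(h³) as h → 0, where y(h) = e^{(μ−λ)h} y_0 is the exact solution. -/
open Filter Asymptotics

lemma expO_aux (c : ℝ) :
    (fun h : ℝ => Real.exp (c * h) - (1 + c * h + (c * h) ^ 2 / 2))
      =O[nhdsWithin (0:ℝ) (Set.Ioi 0)] fun h : ℝ => h ^ 3 := by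
  have htend : Tendsto (fun h : ℝ => c * h) (nhdsWithin (0:ℝ) (Set.Ioi 0)) (nhds 0) := by
    have : Tendsto (fun h : ℝ => c * h) (nhds (0:ℝ)) (nhds (c * 0)) :=
      (continuous_const.mul continuous_id).tendsto 0
    simpa using this.mono_left nhdsWithin_le_nhds
  have h1 : ∀ᶠ h : ℝ in nhdsWithin (0:ℝ) (Set.Ioi 0), |c * h| ≤ 1 := by
    have : ∀ᶠ x : ℝ in nhds (0:ℝ), |x| ≤ 1 := by
      have := Metric.closedBall_mem_nhds (0:ℝ) one_pos
      filter_upwards [this] with x hx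
      simpa [Real.norm_eq_abs] using mem_closedBall_zero_iff.mp hx
    exact htend.eventually this
  rw [isBigO_iff]
  refine ⟨|c| ^ 3 * 2, ?_⟩
  filter_upwards [h1] with h hh
  have hb := Real.exp_bound hh (by norm_num : 0 < 3)
  have hsum : ∑ i ∈ Finset.range 3, (c * h) ^ i / (Nat.factorial i : ℝ)
      = 1 + c * h + (c * h) ^ 2 / 2 := by
    simp [Finset.sum_range_succ, Nat.factorial]
  rw [hsum] at hb
  have h2 : |c * h| ^ 3 * ((3:ℕ).succ / ((Nat.factorial 3 : ℝ) * 3)) ≤ |c| ^ 3 * 2 * |h ^ 3| := by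
    have : |c * h| ^ 3 = |c| ^ 3 * |h ^ 3| := by
      rw [abs_mul, mul_pow, abs_pow]
    rw [this]
    have hnn : (0:ℝ) ≤ |c| ^ 3 * |h ^ 3| := by positivity
    have : ((3:ℕ).succ / ((Nat.factorial 3 : ℝ) * 3)) ≤ 2 := by norm_num [Nat.factorial]
    nlinarith
  calc ‖Real.exp (c * h) - (1 + c * h + (c * h) ^ 2 / 2)‖
      ≤ |c * h| ^ 3 * ((3:ℕ).succ / ((Nat.factorial 3 : ℝ) * 3)) := by
        simpa [Real.norm_eq_abs] using hb
    _ ≤ |c| ^ 3 * 2 * |h ^ 3| := h2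
    _ = |c| ^ 3 * 2 * ‖h ^ 3‖ := by rw [Real.norm_eq_abs]

/-- the one-stage IMSVERK12 method is second-order accurate
on the scalar linear test problem `y' + λy = μy`. -/
theorem imsverk12_local_order (lam mu y0 : ℝ) (Y1 y1 : ℝ → ℝ)
    (hY1 : ∀ᶠ h in nhdsWithin (0:ℝ) (Set.Ioi 0),
      Y1 h = Real.exp (-lam * h / 2) * y0 + h / 2 * mu * Y1 h)
    (hy1 : ∀ h : ℝ, y1 h = Real.exp (-lam * h) * y0 + h * mu * Y1 h
      - h ^ 2 / 2 * lam * mu * y0) :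
    (fun h : ℝ => y1 h - Real.exp ((mu - lam) * h) * y0)
      =O[nhdsWithin (0:ℝ) (Set.Ioi 0)] (fun h : ℝ => h ^ 3) := by
  set l := nhdsWithin (0:ℝ) (Set.Ioi 0) with hl
  have htend : Tendsto (fun h : ℝ => 1 - h * mu / 2) l (nhds 1) := by
    have hc : Continuous fun h : ℝ => 1 - h * mu / 2 := by continuity
    have : Tendsto (fun h : ℝ => 1 - h * mu / 2) l (nhds (1 - 0 * mu / 2)) :=
      (hc.tendsto 0).mono_left nhdsWithin_le_nhds
    simpa using this
  have hne : ∀ᶠ h in l, 1 - h * mu / 2 ≠ 0 := htend.eventually_ne one_ne_zero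
  set F : ℝ → ℝ := fun h =>
    (1 - h * mu / 2) * (Real.exp (-lam * h) * y0 - h ^ 2 / 2 * lam * mu * y0
      - Real.exp ((mu - lam) * h) * y0) + h * mu * (Real.exp (-lam * h / 2) * y0) with hF
  have key : ∀ᶠ h in l, y1 h - Real.exp ((mu - lam) * h) * y0
      = F h * (1 - h * mu / 2)⁻¹ := by
    filter_upwards [hY1, hne] with h hYh hneh
    have hmul : (y1 h - Real.exp ((mu - lam) * h) * y0) * (1 - h * mu / 2) = F h := by
      rw [hy1 h, hF]
      linear_combination (h * mu) * hYh
    rw [← div_eq_mul_inv, eq_div_iff hneh]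
    exact hmul
  have hFO : F =O[l] fun h : ℝ => h ^ 3 := by
    have hA := expO_aux (-lam)
    have hB := expO_aux (mu - lam)
    have hC := expO_aux (-lam / 2)
    have hbd1 : (fun h : ℝ => y0 * (1 - h * mu / 2)) =O[l] (fun _ : ℝ => (1:ℝ)) := by
      exact (htend.const_mul y0).isBigO_one ℝ
    have hbd3 : (fun h : ℝ => y0 * (h * mu)) =O[l] (fun _ : ℝ => (1:ℝ)) := by
      have hc : Continuous fun h : ℝ => y0 * (h * mu) := by continuity
      have : Tendsto (fun h : ℝ => y0 * (h * mu)) l (nhds (y0 * (0 * mu))) :=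
        (hc.tendsto 0).mono_left nhdsWithin_le_nhds
      exact this.isBigO_one ℝ
    have p1 : (fun h : ℝ => y0 * (1 - h * mu / 2) *
        (Real.exp (-lam * h) - (1 + (-lam) * h + ((-lam) * h) ^ 2 / 2)))
        =O[l] fun h : ℝ => h ^ 3 := by
      simpa using hbd1.mul hA
    have p2 : (fun h : ℝ => y0 * (1 - h * mu / 2) *
        (Real.exp ((mu - lam) * h) - (1 + (mu - lam) * h + ((mu - lam) * h) ^ 2 / 2)))
        =O[l] fun h : ℝ => h ^ 3 := by
      simpa using hbd1.mul hB
    have p3 : (fun h : ℝ => y0 * (h * mu) *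
        (Real.exp (-lam / 2 * h) - (1 + (-lam / 2) * h + ((-lam / 2) * h) ^ 2 / 2)))
        =O[l] fun h : ℝ => h ^ 3 := by
      simpa using hbd3.mul hC
    have p4 : (fun h : ℝ => y0 * (mu * lam ^ 2 / 8 - mu ^ 2 * lam / 4 + mu ^ 3 / 4) * h ^ 3)
        =O[l] fun h : ℝ => h ^ 3 :=
      (isBigO_refl (fun h : ℝ => h ^ 3) l).const_mul_left _
    have hsplit : F = fun h : ℝ =>
        (y0 * (1 - h * mu / 2) *
          (Real.exp (-lam * h) - (1 + (-lam) * h + ((-lam) * h) ^ 2 / 2))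
        - y0 * (1 - h * mu / 2) *
          (Real.exp ((mu - lam) * h) - (1 + (mu - lam) * h + ((mu - lam) * h) ^ 2 / 2)))
        + (y0 * (h * mu) *
          (Real.exp (-lam / 2 * h) - (1 + (-lam / 2) * h + ((-lam / 2) * h) ^ 2 / 2))
        + y0 * (mu * lam ^ 2 / 8 - mu ^ 2 * lam / 4 + mu ^ 3 / 4) * h ^ 3) := by
      funext h
      simp only [hF]
      rw [show Real.exp (-lam * h / 2) = Real.exp (-lam / 2 * h) by ring_nf]
      ring
    rw [hsplit]
    exact (p1.sub p2).add (p3.add p4)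
  have hinv : (fun h : ℝ => (1 - h * mu / 2)⁻¹) =O[l] (fun _ : ℝ => (1:ℝ)) := by
    have : Tendsto (fun h : ℝ => (1 - h * mu / 2)⁻¹) l (nhds 1⁻¹) := htend.inv₀ one_ne_zero
    exact this.isBigO_one ℝ
  refine Filter.EventuallyEq.trans_isBigO key ?_
  simpa using hFO.mul hinv
end
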